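/- If p and q are basic open subsets of T and X ∈ p ∩ q, then there exists a basic open subset r of T with X ∈ r and r ⊆ p ∩ q; hence the intersection of two basic open sets is a union of basic open sets, so the basic open sets form a sub-basis generating a topology on T in which they are open. -/

import Mathlib

/-- A sequence of rationals is Cauchy: for every rational `ε > 0` there is `N`
such that `|x m - x n| < ε` for all `m, n ≥ N`. -/
def RatCauchy (x : ℕ → ℚ) : Prop :=
  ∀ ε : ℚ, 0 < ε → ∃ N : ℕ, ∀ m n : ℕ, N ≤ m → N ≤ n → |x m - x n| < ε

/-- The real limit of a sequence of rationals (meaningful when the sequence is Cauchy). -/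
noncomputable def rlim (x : ℕ → ℚ) : ℝ :=
  Filter.limUnder Filter.atTop (fun n => ((x n : ℝ)))

/-- Membership in the space `T`: each `X j` is a Cauchy sequence of rationals, and
the real sequence of their limits is Cauchy. -/
def InT (X : ℕ → ℕ → ℚ) : Prop :=
  (∀ j, RatCauchy (X j)) ∧
  ∀ ε : ℝ, 0 < ε → ∃ N : ℕ, ∀ j k : ℕ, N ≤ j → N ≤ k →
    |rlim (X j) - rlim (X k)| < ε

/-- The data of a basic open set: a natural number `n`, for each `j < n` a finite
list `p j` of rationals and an open interval `(lo j, hi j)`, and a final open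
interval `(Lo, Hi)`. -/
structure BOpen where
  n : ℕ
  p : ℕ → List ℚ
  lo : ℕ → ℝ
  hi : ℕ → ℝ
  Lo : ℝ
  Hi : ℝ

/-- The set of points of `T` belonging to the basic open set `c`. -/
def BOSet (c : BOpen) : Set (ℕ → ℕ → ℚ) :=
  {X | InT X ∧
    (∀ j : ℕ, j < c.n →
      ((∀ i : ℕ, ∀ h : i < (c.p j).length, X j i = (c.p j).get ⟨i, h⟩) ∧
       (∀ i : ℕ, (c.p j).length ≤ i → ((X j i : ℝ)) ∈ Set.Ioo (c.lo j) (c.hi j)) ∧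
       rlim (X j) ∈ Set.Ioo (c.lo j) (c.hi j))) ∧
    (∀ j : ℕ, c.n ≤ j → rlim (X j) ∈ Set.Ioo c.Lo c.Hi) ∧
    ∃ L : ℝ, Filter.Tendsto (fun j => rlim (X j)) Filter.atTop (nhds L) ∧
      L ∈ Set.Ioo c.Lo c.Hi}

/-! For `X ∈ BOSet p ∩ BOSet q`, each limit `L_j(X)` lies in an open set `U_j` cut out by both
constraints. Pick an interval around `L_j(X)` inside `U_j` that contains a tail of `X_j`, and take
as new prefix the initial segment of `X_j` up to the start of that tail (at least as long as both
old prefixes). Together with the intersection of the two final intervals this gives a basic open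
set containing `X` whose points satisfy every constraint of `p` and of `q`. -/

open Set Filter Topology

theorem RatCauchy.cauchySeq {x : ℕ → ℚ} (hx : RatCauchy x) :
    CauchySeq fun n => (x n : ℝ) := by
  rw [Metric.cauchySeq_iff]
  intro ε hε
  obtain ⟨q, hq0, hqε⟩ := exists_rat_btwn hε
  obtain ⟨N, hN⟩ := hx q (mod_cast hq0)
  refine ⟨N, fun m hm n hn => ?_⟩
  calc dist (x m : ℝ) (x n) = ((|x m - x n| : ℚ) : ℝ) := by
        rw [Real.dist_eq]; push_cast; rfl
    _ < q := mod_cast hN m n hm hn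
    _ < ε := hqε

theorem RatCauchy.tendsto_rlim {x : ℕ → ℚ} (hx : RatCauchy x) :
    Tendsto (fun n => (x n : ℝ)) atTop (𝓝 (rlim x)) := by
  obtain ⟨L, hL⟩ := cauchySeq_tendsto_of_complete hx.cauchySeq
  rwa [rlim, hL.limUnder_eq]

theorem RatCauchy.exists_Ioo_tail {x : ℕ → ℚ} (hx : RatCauchy x) {U : Set ℝ}
    (hU : U ∈ 𝓝 (rlim x)) (M : ℕ) :
    ∃ a b : ℝ, ∃ N : ℕ, M ≤ N ∧ rlim x ∈ Ioo a b ∧ Ioo a b ⊆ U ∧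
      ∀ i, N ≤ i → (x i : ℝ) ∈ Ioo a b := by
  obtain ⟨a, b, hab, habU⟩ := mem_nhds_iff_exists_Ioo_subset.1 hU
  obtain ⟨N, hN⟩ := eventually_atTop.1 (hx.tendsto_rlim.eventually (isOpen_Ioo.mem_nhds hab))
  exact ⟨a, b, max M N, le_max_left _ _, hab, habU,
    fun i hi => hN i ((le_max_right _ _).trans hi)⟩

namespace BOpen

def interval (c : BOpen) (j : ℕ) : Set ℝ :=
  if j < c.n then Ioo (c.lo j) (c.hi j) else Ioo c.Lo c.Hi

theorem isOpen_interval (c : BOpen) (j : ℕ) : IsOpen (c.interval j) := by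
  unfold interval; split <;> exact isOpen_Ioo

theorem interval_of_lt {c : BOpen} {j : ℕ} (hj : j < c.n) :
    c.interval j = Ioo (c.lo j) (c.hi j) := if_pos hj

theorem interval_of_le {c : BOpen} {j : ℕ} (hj : c.n ≤ j) :
    c.interval j = Ioo c.Lo c.Hi := if_neg (not_lt.2 hj)

theorem rlim_mem_interval {c : BOpen} {X : ℕ → ℕ → ℚ} (hX : X ∈ BOSet c) (j : ℕ) :
    rlim (X j) ∈ c.interval j := by
  rcases lt_or_ge j c.n with hj | hj
  · rw [interval_of_lt hj]; exact (hX.2.1 j hj).2.2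
  · rw [interval_of_le hj]; exact hX.2.2.1 j hj

end BOpen

theorem BOSet_subset_of_extends {p r : BOpen} {X : ℕ → ℕ → ℚ} (hX : X ∈ BOSet p)
    (hn : p.n ≤ r.n)
    (hlen : ∀ j < p.n, (p.p j).length ≤ (r.p j).length)
    (hget : ∀ j < p.n, ∀ i (h : i < (r.p j).length), (r.p j).get ⟨i, h⟩ = X j i)
    (hint : ∀ j < r.n, Ioo (r.lo j) (r.hi j) ⊆ p.interval j)
    (hLoHi : Ioo r.Lo r.Hi ⊆ Ioo p.Lo p.Hi) :
    BOSet r ⊆ BOSet p := by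
  rintro Y ⟨hT, hpre, htail, L, hL, hLmem⟩
  refine ⟨hT, fun j hj => ?_, fun j hj => ?_, L, hL, hLoHi hLmem⟩
  · have hjr := hj.trans_le hn
    have hint' : Ioo (r.lo j) (r.hi j) ⊆ Ioo (p.lo j) (p.hi j) :=
      BOpen.interval_of_lt hj ▸ hint j hjr
    obtain ⟨hYpre, hYtail, hYlim⟩ := hpre j hjr
    refine ⟨fun i h => ?_, fun i h => ?_, hint' hYlim⟩
    · have h' := h.trans_le (hlen j hj)
      rw [hYpre i h', hget j hj i h']
      exact (hX.2.1 j hj).1 i h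
    · by_cases h' : i < (r.p j).length
      · rw [hYpre i h', hget j hj i h']
        exact (hX.2.1 j hj).2.1 i h
      · exact hint' (hYtail i (not_lt.1 h'))
  · rcases lt_or_ge j r.n with hjr | hjr
    · exact BOpen.interval_of_le hj ▸ hint j hjr (hpre j hjr).2.2
    · exact hLoHi (htail j hjr)

def BOpen.refineAt (p q : BOpen) (X : ℕ → ℕ → ℚ) (N : ℕ → ℕ) (a b : ℕ → ℝ) : BOpen :=
  ⟨max p.n q.n, fun j => List.ofFn fun i : Fin (N j) => X j i, a, b,
    max p.Lo q.Lo, min p.Hi q.Hi⟩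

theorem exists_BOSet_subset_inter {p q : BOpen} {X : ℕ → ℕ → ℚ}
    (hX : X ∈ BOSet p ∩ BOSet q) : ∃ r : BOpen, X ∈ BOSet r ∧ BOSet r ⊆ BOSet p ∩ BOSet q := by
  obtain ⟨hp, hq⟩ := hX
  have hnhds : ∀ j, p.interval j ∩ q.interval j ∈ 𝓝 (rlim (X j)) := fun j =>
    ((p.isOpen_interval j).inter (q.isOpen_interval j)).mem_nhds
      ⟨p.rlim_mem_interval hp j, q.rlim_mem_interval hq j⟩
  choose a b N hNlen hab habsub htail using fun j =>
    (hp.1.1 j).exists_Ioo_tail (hnhds j) (max (p.p j).length (q.p j).length)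
  obtain ⟨Lp, hLp, hLpmem⟩ := hp.2.2.2
  obtain ⟨Lq, hLq, hLqmem⟩ := hq.2.2.2
  obtain rfl : Lq = Lp := tendsto_nhds_unique hLq hLp
  set r := BOpen.refineAt p q X N a b
  have hlen : ∀ j, (r.p j).length = N j := fun j => List.length_ofFn
  have hget : ∀ j i (h : i < (r.p j).length), (r.p j).get ⟨i, h⟩ = X j i := by
    intro j i h; simp [r, BOpen.refineAt]
  have hLoHi : Ioo r.Lo r.Hi = Ioo p.Lo p.Hi ∩ Ioo q.Lo q.Hi := Ioo_inter_Ioo.symm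
  have hlim_tail : ∀ j, r.n ≤ j → rlim (X j) ∈ Ioo r.Lo r.Hi := fun j hj => hLoHi ▸
    ⟨p.interval_of_le (le_of_max_le_left hj) ▸ p.rlim_mem_interval hp j,
      q.interval_of_le (le_of_max_le_right hj) ▸ q.rlim_mem_interval hq j⟩
  refine ⟨r, ⟨hp.1, fun j _ => ⟨fun i h => (hget j i h).symm, fun i h => htail j i (hlen j ▸ h),
    hab j⟩, hlim_tail, Lq, hLq, hLoHi ▸ ⟨hLpmem, hLqmem⟩⟩, subset_inter ?_ ?_⟩
  · exact BOSet_subset_of_extends hp (le_max_left _ _)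
      (fun j _ => hlen j ▸ (le_max_left _ _).trans (hNlen j)) (fun j _ => hget j)
      (fun j _ => (habsub j).trans inter_subset_left) (hLoHi ▸ inter_subset_left)
  · exact BOSet_subset_of_extends hq (le_max_right _ _)
      (fun j _ => hlen j ▸ (le_max_right _ _).trans (hNlen j)) (fun j _ => hget j)
      (fun j _ => (habsub j).trans inter_subset_right) (hLoHi ▸ inter_subset_right)

theorem stmt14 :
    (∀ (p q : BOpen) (X : ℕ → ℕ → ℚ), X ∈ BOSet p ∩ BOSet q →
      ∃ r : BOpen, X ∈ BOSet r ∧ BOSet r ⊆ BOSet p ∩ BOSet q) ∧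
    (∀ p q : BOpen, ∃ 𝒮 : Set BOpen, BOSet p ∩ BOSet q = ⋃ r ∈ 𝒮, BOSet r) ∧
    (∀ c : BOpen,
      (TopologicalSpace.generateFrom {s : Set (ℕ → ℕ → ℚ) | ∃ d : BOpen, s = BOSet d}).IsOpen
        (BOSet c)) := by
  refine ⟨fun p q X hX => exists_BOSet_subset_inter hX, fun p q => ?_,
    fun c => TopologicalSpace.GenerateOpen.basic _ ⟨c, rfl⟩⟩
  refine ⟨{r | BOSet r ⊆ BOSet p ∩ BOSet q}, Subset.antisymm (fun X hX => ?_) ?_⟩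
  · obtain ⟨r, hXr, hr⟩ := exists_BOSet_subset_inter hX
    exact mem_biUnion hr hXr
  · exact iUnion₂_subset fun r hr => hr
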